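/- arXiv:0909.0053 — 5 statements merged into one kernel-verified Lean document; each statement's English description precedes it below -/
import Mathlib

section
/- Let G ∈ 𝔾 and let S be a structural set of G. Then σ(G)∖N(G;S) = σ(R_S(G))∖N(G;S); that is, the spectrum of G and the spectrum of its isospectral reduction R_S(G) differ at most by the set N(G;S). -/
open scoped Classical

noncomputable section

/-- A finite weighted digraph with weights in the field `𝕎 = RatFunc ℂ` of complex
rational functions: a finite vertex set together with a weight function, where
weight `0` encodes the absence of an edge (no parallel edges, loops allowed). -/
structure WDigraph (V : Type*) [Fintype V] [DecidableEq V] where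
  verts : Finset V
  w : V → V → RatFunc ℂ

namespace WDigraph

variable {V : Type*} [Fintype V] [DecidableEq V]

/-- Membership in `𝔾`: all edges (nonzero weights) join vertices of `G`. -/
def Wf (G : WDigraph V) : Prop :=
  ∀ u v, G.w u v ≠ 0 → u ∈ G.verts ∧ v ∈ G.verts

/-- `det (M(G) - λ I)` as an element of `𝕎`. -/
def charDet (G : WDigraph V) : RatFunc ℂ :=
  Matrix.det (Matrix.of fun i j : G.verts =>
    G.w i.1 j.1 - if i = j then (RatFunc.X : RatFunc ℂ) else 0)

/-- The spectrum of `G`: the list (multiset) of complex solutions, with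
multiplicity, of `det (M(G,λ) - λ I) = 0`. -/
def spec (G : WDigraph V) : Multiset ℂ := G.charDet.num.roots

/-- Membership in `𝔾_π`: every adjacency matrix entry `p/q` has `π(p/q) = deg p - deg q ≤ 0`. -/
def PiNonpos (G : WDigraph V) : Prop :=
  ∀ u v, (G.w u v).num.degree ≤ (G.w u v).denom.degree

end WDigraph

/-- Two spectra (lists) differ at most by the set `N`: after removing all entries
with values in `N` they agree. -/
def SpecDiffAtMost (s₁ s₂ : Multiset ℂ) (N : Set ℂ) : Prop :=
  s₁.filter (fun z => z ∉ N) = s₂.filter (fun z => z ∉ N)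

variable {V : Type*} [Fintype V] [DecidableEq V]

/-- `S` is a structural set of `G`: `S` is a nonempty subset of the vertices, the
complement of `S` induces no cycles in `ℓ(G)` (i.e. no closed walk through
consecutive-distinct vertices all lying outside `S`), and no loop at a vertex
outside `S` has weight `λ`. -/
def IsStructuralSet (G : WDigraph V) (S : Finset V) : Prop :=
  S.Nonempty ∧ S ⊆ G.verts ∧
    (∀ v, ¬ Relation.TransGen
      (fun a b => a ∈ G.verts ∧ b ∈ G.verts ∧ a ∉ S ∧ b ∉ S ∧ a ≠ b ∧ G.w a b ≠ 0) v v) ∧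
    ∀ v ∈ G.verts, v ∉ S → G.w v v ≠ RatFunc.X

/-- `β` is a branch of `G` from `u` to `v` with respect to `S`: a path or cycle
from `u` to `v` in `G` all of whose interior vertices lie outside `S`. -/
def IsBranch (G : WDigraph V) (S : Finset V) (u v : V) (β : List V) : Prop :=
  u ∈ S ∧ v ∈ S ∧
    ∃ int : List V, β = u :: (int ++ [v]) ∧
      (∀ x ∈ int, x ∈ G.verts ∧ x ∉ S) ∧
      (u :: int).Nodup ∧ v ∉ int ∧
      List.Chain' (fun a b => G.w a b ≠ 0) β

/-- The branch product `𝒫_ω(β)` of a branch `β = v₁, …, v_m`. -/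
def branchProd {V : Type*} (w : V → V → RatFunc ℂ) : List V → RatFunc ℂ
  | [] => 0
  | [_] => 0
  | [a, b] => w a b
  | a :: b :: c :: rest => w a b * branchProd w (b :: c :: rest) / (RatFunc.X - w b b)

/-- The isospectral reduction `R_S(G)`: the graph on vertex set `S` whose weight
from `u` to `v` is the sum of the branch products of all branches from `u` to
`v` with respect to `S`. -/
def WDigraph.reduce (G : WDigraph V) (S : Finset V) : WDigraph V where
  verts := S
  w := fun u v => ∑ᶠ β ∈ {β : List V | IsBranch G S u v β}, branchProd G.w β

/-- The set `N(G;S)`: all `z ∈ ℂ` such that for some vertex `v` of `G` off `S`,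
either `z = ω(e_vv)(z)` or `ω(e_vv)` is undefined at `z`. -/
def NSet (G : WDigraph V) (S : Finset V) : Set ℂ :=
  {z | ∃ v ∈ G.verts, v ∉ S ∧
    ((RatFunc.X - G.w v v).num.eval z = 0 ∨ (G.w v v).denom.eval z = 0)}

/-- Isomorphism of weighted digraphs: a vertex bijection carrying edges to edges
and preserving weights. -/
def WDigraph.Isom {V₁ : Type*} [Fintype V₁] [DecidableEq V₁]
    {V₂ : Type*} [Fintype V₂] [DecidableEq V₂]
    (G : WDigraph V₁) (H : WDigraph V₂) : Prop :=
  ∃ ρ : G.verts ≃ H.verts, ∀ u v : G.verts, H.w (ρ u).1 (ρ v).1 = G.w u.1 v.1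

/-!
Order the vertices of `G` with `S` first, so that `M(G) - λI = [[A, B], [C, D]]` with `D` the
block on `S̄ = V ∖ S`; then `det (M(G) - λI) = det D · det (A - B D⁻¹ C)`. Since `S̄` induces no
cycle of `ℓ(G)`, `D = -(1 - N) Λ` with `Λ = diag (λ - ω(e_vv))` invertible and `N` nilpotent, so
`det D = ∏_{v ∈ S̄} (ω(e_vv) - λ)` and `D⁻¹ = -Λ⁻¹ ∑_{k < |S̄|} N ^ k`. Expanding the powers of
`N` as sums over walks through `S̄` identifies `A - B D⁻¹ C` with `M(R_S(G)) - λI`: by acyclicity,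
a walk with nonzero product and no two equal consecutive vertices is a branch. Finally the factors
`ω(e_vv) - λ` have neither zeros nor poles outside `N(G;S)`, so multiplying by them does not
change the multiplicity of any root outside `N(G;S)` of the numerator.
-/

namespace RatFunc

variable {K : Type*} [Field K]

def IsUnitAt (z : K) (f : RatFunc K) : Prop :=
  f.num.eval z ≠ 0 ∧ f.denom.eval z ≠ 0

lemma not_eval_num_eq_zero_and_eval_denom_eq_zero (f : RatFunc K) (z : K) :
    ¬(f.num.eval z = 0 ∧ f.denom.eval z = 0) := by
  rintro ⟨hnum, hdenom⟩
  obtain ⟨a, b, hab⟩ := isCoprime_num_denom f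
  simpa [hnum, hdenom] using congrArg (Polynomial.eval z) hab

lemma eval_ne_zero_of_eq_div {f : RatFunc K} {p q : Polynomial K} {z : K}
    (hf : f = algebraMap _ _ p / algebraMap _ _ q) (hq : q ≠ 0) (hnum : f.num.eval z ≠ 0)
    (hqz : q.eval z ≠ 0) : p.eval z ≠ 0 := by
  have h := congrArg (Polynomial.eval z) ((num_mul_eq_mul_denom_iff hq).2 hf)
  simp only [Polynomial.eval_mul] at h
  intro hp
  rw [hp, zero_mul] at h
  exact mul_ne_zero hnum hqz h

lemma isUnitAt_of_eq_div {f : RatFunc K} {p q : Polynomial K} {z : K}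
    (hf : f = algebraMap _ _ p / algebraMap _ _ q) (hq : q ≠ 0) (hp : p.eval z ≠ 0)
    (hqz : q.eval z ≠ 0) : IsUnitAt z f := by
  have h := congrArg (Polynomial.eval z) ((num_mul_eq_mul_denom_iff hq).2 hf)
  simp only [Polynomial.eval_mul] at h
  have hdenom : f.denom.eval z ≠ 0 := fun h0 => by
    rw [h0, mul_zero, mul_eq_zero] at h
    exact not_eval_num_eq_zero_and_eval_denom_eq_zero f z ⟨h.resolve_right hqz, h0⟩
  exact ⟨fun h0 => mul_ne_zero hp hdenom (by rw [← h, h0, zero_mul]), hdenom⟩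

lemma IsUnitAt.ne_zero {f : RatFunc K} {z : K} (hf : IsUnitAt z f) : f ≠ 0 := by
  rintro rfl
  exact hf.1 (by simp)

lemma isUnitAt_one (z : K) : IsUnitAt z 1 := by
  simp [IsUnitAt]

lemma IsUnitAt.mul {f g : RatFunc K} {z : K} (hf : IsUnitAt z f) (hg : IsUnitAt z g) :
    IsUnitAt z (f * g) := by
  refine isUnitAt_of_eq_div (p := f.num * g.num) (q := f.denom * g.denom) ?_
    (mul_ne_zero f.denom_ne_zero g.denom_ne_zero) (by simp [hf.1, hg.1]) (by simp [hf.2, hg.2])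
  conv_lhs => rw [← num_div_denom f, ← num_div_denom g]
  simp only [map_mul]
  rw [mul_div_mul_comm]

lemma isUnitAt_prod {ι : Type*} {s : Finset ι} {f : ι → RatFunc K} {z : K}
    (hf : ∀ i ∈ s, IsUnitAt z (f i)) : IsUnitAt z (∏ i ∈ s, f i) :=
  Finset.prod_induction _ _ (fun _ _ => IsUnitAt.mul) (isUnitAt_one z) hf

lemma rootMultiplicity_num_eq_zero_or_rootMultiplicity_denom_eq_zero (f : RatFunc K) (z : K) :
    f.num.rootMultiplicity z = 0 ∨ f.denom.rootMultiplicity z = 0 := by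
  by_contra! h
  exact not_eval_num_eq_zero_and_eval_denom_eq_zero f z
    ⟨(Polynomial.rootMultiplicity_pos'.1 h.1.bot_lt).2,
      (Polynomial.rootMultiplicity_pos'.1 h.2.bot_lt).2⟩

lemma rootMultiplicity_num_mul_of_isUnitAt {f g : RatFunc K} {z : K} (hg : IsUnitAt z g) :
    (g * f).num.rootMultiplicity z = f.num.rootMultiplicity z := by
  rcases eq_or_ne f 0 with rfl | hf
  · simp
  have hgf : g * f ≠ 0 := mul_ne_zero hg.ne_zero hf
  have key := congrArg (Polynomial.rootMultiplicity z) (num_denom_mul g f)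
  rw [Polynomial.rootMultiplicity_mul, Polynomial.rootMultiplicity_mul,
    Polynomial.rootMultiplicity_mul, Polynomial.rootMultiplicity_mul,
    Polynomial.rootMultiplicity_eq_zero hg.1, Polynomial.rootMultiplicity_eq_zero hg.2] at key
  · have := rootMultiplicity_num_eq_zero_or_rootMultiplicity_denom_eq_zero f z
    have := rootMultiplicity_num_eq_zero_or_rootMultiplicity_denom_eq_zero (g * f) z
    omega
  all_goals simp [hf, hg.ne_zero, hgf, denom_ne_zero]

end RatFunc

open Finset Relation

namespace Relation

variable {α : Type*} [Fintype α] {r : α → α → Prop}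

variable (r) in
def height (a : α) : ℕ := #{u | TransGen r u a}

lemma height_lt_height (hr : ∀ a, ¬ TransGen r a a) {a b : α} (hab : r a b) :
    height r a < height r b := by
  refine Finset.card_lt_card ⟨fun u hu => ?_, fun hsub => hr a ?_⟩
  · simp only [mem_filter, mem_univ, true_and] at hu ⊢
    exact hu.tail hab
  · simpa using hsub (by simpa using TransGen.single hab)

lemma height_lt_card (hr : ∀ a, ¬ TransGen r a a) (a : α) : height r a < Fintype.card α :=
  Finset.card_lt_univ_of_notMem (x := a) (by simpa using hr a)

end Relation

namespace Matrix

variable {ι R : Type*} [Fintype ι] [DecidableEq ι] [CommRing R] {r : ι → ι → Prop}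

lemma height_add_le_of_pow_apply_ne_zero (hr : ∀ a, ¬ TransGen r a a) {N : Matrix ι ι R}
    (hN : ∀ i j, N i j ≠ 0 → r i j) (k : ℕ) {i j : ι} (h : (N ^ k) i j ≠ 0) :
    height r i + k ≤ height r j := by
  induction k generalizing j with
  | zero =>
    obtain rfl : i = j := by by_contra hij; exact h (one_apply_ne hij)
    simp
  | succ k ih =>
    rw [pow_succ, mul_apply] at h
    obtain ⟨l, -, hl⟩ := Finset.exists_ne_zero_of_sum_ne_zero h
    have := ih (left_ne_zero_of_mul hl)
    have := height_lt_height hr (hN l j (right_ne_zero_of_mul hl))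
    omega

lemma pow_card_eq_zero_of_acyclic (hr : ∀ a, ¬ TransGen r a a) {N : Matrix ι ι R}
    (hN : ∀ i j, N i j ≠ 0 → r i j) : N ^ Fintype.card ι = 0 := by
  ext i j
  by_contra h
  have := height_add_le_of_pow_apply_ne_zero hr hN _ h
  have := height_lt_card hr j
  omega

/-- Any `σ ≠ 1` with `∏ i, M (σ i) i ≠ 0` would strictly lower `∑ i, height r i`. -/
lemma det_eq_prod_diag_of_acyclic (hr : ∀ a, ¬ TransGen r a a) {M : Matrix ι ι R}
    (hM : ∀ i j, i ≠ j → M i j ≠ 0 → r i j) : M.det = ∏ i, M i i := by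
  rw [det_apply, Finset.sum_eq_single 1 _ (by simp)]
  · simp
  intro σ _ hσ
  suffices ∃ i, M (σ i) i = 0 by
    obtain ⟨i, hi⟩ := this
    rw [Finset.prod_eq_zero (f := fun i => M (σ i) i) (mem_univ i) hi, smul_zero]
  by_contra! hne
  have hle (i : ι) : height r (σ i) ≤ height r i := by
    by_cases h : σ i = i
    · rw [h]
    · exact (height_lt_height hr (hM _ _ h (hne i))).le
  obtain ⟨i, hi⟩ : ∃ i, σ i ≠ i := not_forall.1 fun h => hσ (Equiv.ext h)
  have := Finset.sum_lt_sum (fun i _ => hle i)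
    ⟨i, mem_univ i, height_lt_height hr (hM _ _ hi (hne i))⟩
  rw [Equiv.sum_comp σ (height r)] at this
  exact lt_irrefl _ this

end Matrix

local notation "𝕎" => RatFunc ℂ

lemma branchProd_cons_cons {α : Type*} (w : α → α → 𝕎) (a b : α) {L : List α}
    (hL : L ≠ []) :
    branchProd w (a :: b :: L) = w a b / (RatFunc.X - w b b) * branchProd w (b :: L) := by
  obtain ⟨c, L, rfl⟩ := List.exists_cons_of_ne_nil hL
  rw [branchProd]
  ring

lemma isChain_of_branchProd_ne_zero {α : Type*} {w : α → α → 𝕎} :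
    ∀ {β : List α}, branchProd w β ≠ 0 → β.IsChain (fun a b => w a b ≠ 0)
  | [], _ => .nil
  | [_], _ => .singleton _
  | [a, b], h => List.isChain_pair.2 h
  | a :: b :: c :: L, h => by
    rw [branchProd, div_ne_zero_iff, mul_ne_zero_iff] at h
    exact List.isChain_cons_cons.2 ⟨h.1.1, isChain_of_branchProd_ne_zero h.1.2⟩

lemma List.IsChain.nodup_of_acyclic {α : Type*} {r : α → α → Prop}
    (hr : ∀ a, ¬ TransGen r a a) {L : List α} (h : L.IsChain r) : L.Nodup :=
  List.Pairwise.imp (fun {a b} (hab : TransGen r a b) (heq : a = b) => hr b (heq ▸ hab))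
    (h.imp fun _ _ => TransGen.single).pairwise

namespace WDigraph

open Matrix

variable (G : WDigraph V) (S : Finset V)

def charEntry (a b : V) : 𝕎 := G.w a b - if a = b then RatFunc.X else 0

def charBlock (s t : Finset V) : Matrix s t 𝕎 := of fun a b => G.charEntry a b

/-- The factor a branch picks up on a step from `a` to `b`, see `branchProd_cons_cons`. -/
def stepWeight (a b : V) : 𝕎 := if a = b then 0 else G.w a b / (RatFunc.X - G.w b b)

def stepBlock (s t : Finset V) : Matrix s t 𝕎 := of fun a b => G.stepWeight a b

def loopFreeAdj (s : Finset V) (a b : s) : Prop := (a : V) ≠ b ∧ G.w a b ≠ 0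

/-- The inverse of `charBlock (G.verts \ S) (G.verts \ S) = -(1 - N) Λ`, where `Λ` is diagonal
with entries `λ - ω(e_vv)` and `N` is the nilpotent `stepBlock`. -/
def complInv : Matrix ↥(G.verts \ S) ↥(G.verts \ S) 𝕎 :=
  -(diagonal (fun v : ↥(G.verts \ S) => (RatFunc.X - G.w v v)⁻¹) *
    ∑ k ∈ Finset.range #(G.verts \ S), G.stepBlock (G.verts \ S) (G.verts \ S) ^ k)

variable {G S}

lemma charEntry_of_ne {a b : V} (h : a ≠ b) : G.charEntry a b = G.w a b := by
  simp [charEntry, h]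

lemma _root_.IsStructuralSet.acyclic (hS : IsStructuralSet G S) (a : ↥(G.verts \ S)) :
    ¬ TransGen (G.loopFreeAdj (G.verts \ S)) a a := fun h => hS.2.2.1 a <| by
  refine h.lift Subtype.val fun a b ⟨hab, hw⟩ => ?_
  obtain ⟨ha, ha'⟩ := mem_sdiff.1 a.2
  obtain ⟨hb, hb'⟩ := mem_sdiff.1 b.2
  exact ⟨ha, hb, ha', hb', hab, hw⟩

lemma _root_.IsStructuralSet.sub_loop_ne_zero (hS : IsStructuralSet G S) {v : V}
    (hv : v ∈ G.verts \ S) : RatFunc.X - G.w v v ≠ 0 :=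
  sub_ne_zero.2 (hS.2.2.2 v (mem_sdiff.1 hv).1 (mem_sdiff.1 hv).2).symm

lemma det_charBlock_compl (hS : IsStructuralSet G S) :
    (G.charBlock (G.verts \ S) (G.verts \ S)).det =
      ∏ v : ↥(G.verts \ S), (G.w v v - RatFunc.X) := by
  refine (det_eq_prod_diag_of_acyclic hS.acyclic fun a b hab h => ?_).trans
    (by simp [charBlock, charEntry])
  have hab' : (a : V) ≠ b := Subtype.coe_injective.ne hab
  exact ⟨hab', by simpa [charBlock, charEntry_of_ne hab'] using h⟩

lemma stepBlock_compl_pow_card (hS : IsStructuralSet G S) :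
    G.stepBlock (G.verts \ S) (G.verts \ S) ^ #(G.verts \ S) = 0 := by
  rw [← Fintype.card_coe]
  refine pow_card_eq_zero_of_acyclic hS.acyclic fun a b h => ?_
  have hab : (a : V) ≠ b := fun hab => h (show G.stepWeight a b = 0 by simp [stepWeight, hab])
  exact ⟨hab, fun hw => h (by simp [stepBlock, stepWeight, hw])⟩

lemma charBlock_compl_eq (hS : IsStructuralSet G S) :
    G.charBlock (G.verts \ S) (G.verts \ S) =
      -((1 - G.stepBlock (G.verts \ S) (G.verts \ S)) *
        diagonal fun v : ↥(G.verts \ S) => RatFunc.X - G.w v v) := by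
  ext a b
  by_cases hab : a = b
  · subst hab
    simp [charBlock, charEntry, stepBlock, stepWeight]
  · simp [charBlock, charEntry, stepBlock, stepWeight, hab,
      div_mul_cancel₀ _ (hS.sub_loop_ne_zero b.2)]

lemma charBlock_compl_mul_complInv (hS : IsStructuralSet G S) :
    G.charBlock (G.verts \ S) (G.verts \ S) * G.complInv S = 1 := by
  have hdiag : (diagonal fun v : ↥(G.verts \ S) => RatFunc.X - G.w v v) *
      diagonal (fun v : ↥(G.verts \ S) => (RatFunc.X - G.w v v)⁻¹) = 1 := by
    rw [diagonal_mul_diagonal, ← diagonal_one]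
    exact congrArg diagonal (funext fun v => mul_inv_cancel₀ (hS.sub_loop_ne_zero v.2))
  rw [charBlock_compl_eq hS, complInv, neg_mul_neg, Matrix.mul_assoc,
    ← Matrix.mul_assoc (diagonal _), hdiag, Matrix.one_mul, mul_neg_geom_sum,
    stepBlock_compl_pow_card hS, sub_zero]

lemma charBlock_mul_diagonal_inv :
    G.charBlock S (G.verts \ S) *
        diagonal (fun v : ↥(G.verts \ S) => (RatFunc.X - G.w v v)⁻¹) =
      G.stepBlock S (G.verts \ S) := by
  ext i b
  have hib : (i : V) ≠ b := fun h => (mem_sdiff.1 b.2).2 (h ▸ i.2)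
  simp [charBlock, stepBlock, stepWeight, charEntry_of_ne hib, hib, div_eq_mul_inv]

def walkList {α : Type*} {t : Finset α} {m : ℕ} (c : Fin m → t) : List α :=
  List.ofFn fun k => (c k : α)

variable (G) in
def walkSum (t : Finset V) (j : V) (k : ℕ) (a : V) : 𝕎 :=
  ∑ c : Fin k → t, if (a :: walkList c).IsChain (· ≠ ·)
    then branchProd G.w (a :: (walkList c ++ [j])) else 0

lemma walkSum_zero (t : Finset V) (j a : V) : G.walkSum t j 0 a = G.w a j := by
  simp [walkSum, walkList, branchProd]

lemma walkSum_succ (t : Finset V) (j : V) (k : ℕ) (a : V) :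
    G.walkSum t j (k + 1) a = ∑ b : t, G.stepWeight a b * G.walkSum t j k b := by
  rw [walkSum, ← (Fin.consEquiv fun _ => ↥t).sum_comp, Fintype.sum_prod_type]
  refine sum_congr rfl fun b _ => ?_
  rw [walkSum, mul_sum]
  refine sum_congr rfl fun c _ => ?_
  have hcons : walkList (Fin.consEquiv (fun _ => ↥t) (b, c)) = (b : V) :: walkList c := by
    simp [walkList, List.ofFn_succ]
  rw [hcons, List.cons_append, branchProd_cons_cons _ _ _ (by simp)]
  simp only [List.isChain_cons_cons, stepWeight]
  split_ifs <;> simp_all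

lemma stepBlock_pow_mul_charBlock_apply {s t : Finset V} (hst : Disjoint s t) (k : ℕ) (b : t)
    (j : s) : (G.stepBlock t t ^ k * G.charBlock t s) b j = G.walkSum t j k b := by
  induction k generalizing b with
  | zero =>
    have hbj : (b : V) ≠ j := fun h => disjoint_left.1 hst j.2 (h ▸ b.2)
    simp [charBlock, charEntry_of_ne hbj, walkSum_zero]
  | succ k ih =>
    rw [pow_succ', Matrix.mul_assoc, mul_apply, walkSum_succ]
    exact sum_congr rfl fun c _ => by rw [ih]; rfl

lemma stepBlock_mul_pow_mul_charBlock_apply {s t : Finset V} (hst : Disjoint s t) (k : ℕ)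
    (i j : s) :
    (G.stepBlock s t * G.stepBlock t t ^ k * G.charBlock t s) i j = G.walkSum t j (k + 1) i := by
  rw [Matrix.mul_assoc, mul_apply, walkSum_succ]
  exact sum_congr rfl fun b _ => by rw [stepBlock_pow_mul_charBlock_apply hst]; rfl

lemma isBranch_iff_isChain (hS : IsStructuralSet G S) {i j : V} (hi : i ∈ S) (hj : j ∈ S)
    {L : List V} (hL : ∀ x ∈ L, x ∈ G.verts \ S)
    (hβ : branchProd G.w (i :: (L ++ [j])) ≠ 0) :
    IsBranch G S i j (i :: (L ++ [j])) ↔ (i :: L).IsChain (· ≠ ·) := by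
  have hLS (x : V) (hx : x ∈ L) : x ∉ S := (mem_sdiff.1 (hL x hx)).2
  constructor
  · rintro ⟨-, -, int, heq, -, hnodup, -, -⟩
    obtain rfl : L = int := List.append_cancel_right (List.cons_injective heq)
    exact List.Pairwise.isChain hnodup
  · intro hne
    have hw := isChain_of_branchProd_ne_zero hβ
    have hLw : L.IsChain (fun a b => G.w a b ≠ 0) := hw.tail.left_of_append
    have hLr : L.IsChain fun a b =>
        a ∈ G.verts ∧ b ∈ G.verts ∧ a ∉ S ∧ b ∉ S ∧ a ≠ b ∧ G.w a b ≠ 0 := by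
      refine List.isChain_iff_getElem.2 fun k hk => ?_
      obtain ⟨ha, ha'⟩ := mem_sdiff.1 (hL _ (List.getElem_mem (Nat.lt_of_succ_lt hk)))
      obtain ⟨hb, hb'⟩ := mem_sdiff.1 (hL _ (List.getElem_mem hk))
      exact ⟨ha, hb, ha', hb', hne.tail.getElem k hk, hLw.getElem k hk⟩
    exact ⟨hi, hj, L, rfl, fun x hx => mem_sdiff.1 (hL x hx),
      List.nodup_cons.2 ⟨fun h => hLS i h hi, hLr.nodup_of_acyclic hS.2.2.1⟩,
      fun h => hLS j h hj, hw⟩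

lemma walkList_mem {α : Type*} {t : Finset α} {m : ℕ} (c : Fin m → t) :
    ∀ x ∈ walkList c, x ∈ t := by
  simp [walkList]

lemma cons_walkList_append_injective {α : Type*} (i j : α) (t : Finset α) (m : ℕ) :
    Function.Injective fun c : Fin m → t => i :: (walkList c ++ [j]) := fun _ _ h =>
  funext fun k => Subtype.ext <|
    congrFun (List.ofFn_injective (List.append_cancel_right (List.cons_injective h))) k

lemma setOf_isBranch_length_eq_image (i j : V) (m : ℕ) :
    {β | IsBranch G S i j β ∧ β.length = m + 2} =
      (fun c : Fin m → ↥(G.verts \ S) => i :: (walkList c ++ [j])) ''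
        {c | IsBranch G S i j (i :: (walkList c ++ [j]))} := by
  ext β
  constructor
  · rintro ⟨hβ, hlen⟩
    obtain ⟨-, -, L, rfl, hL, -⟩ := id hβ
    obtain rfl : L.length = m := by simpa using hlen
    refine ⟨fun k => ⟨L.get k, mem_sdiff.2 (hL _ (List.get_mem _ _))⟩, ?_, ?_⟩ <;>
      simp [walkList, hβ]
  · rintro ⟨c, hc, rfl⟩
    exact ⟨hc, by simp [walkList]⟩

lemma walkSum_eq_finsum_isBranch (hS : IsStructuralSet G S) {i j : V} (hi : i ∈ S) (hj : j ∈ S)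
    (m : ℕ) : G.walkSum (G.verts \ S) j m i =
      ∑ᶠ β ∈ {β | IsBranch G S i j β ∧ β.length = m + 2}, branchProd G.w β := by
  rw [setOf_isBranch_length_eq_image,
    finsum_mem_image (cons_walkList_append_injective i j _ m).injOn, walkSum]
  have hterm (c : Fin m → ↥(G.verts \ S)) :
      (if (i :: walkList c).IsChain (· ≠ ·)
        then branchProd G.w (i :: (walkList c ++ [j])) else 0) =
        if IsBranch G S i j (i :: (walkList c ++ [j]))
          then branchProd G.w (i :: (walkList c ++ [j])) else 0 := by
    by_cases hβ : branchProd G.w (i :: (walkList c ++ [j])) = 0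
    · simp [hβ]
    · simp only [isBranch_iff_isChain hS hi hj (walkList_mem c) hβ]
  simp only [hterm]
  rw [← Finset.sum_filter, ← finsum_mem_coe_finset, coe_filter]
  simp

lemma _root_.IsBranch.length_le {i j : V} {β : List V} (hβ : IsBranch G S i j β) :
    β.length ≤ #(G.verts \ S) + 2 := by
  obtain ⟨-, -, L, rfl, hL, hnodup, -, -⟩ := hβ
  have : L.length ≤ #(G.verts \ S) := by
    rw [← List.toFinset_card_of_nodup (List.nodup_cons.1 hnodup).2]
    exact card_le_card fun x hx => mem_sdiff.2 (hL x (List.mem_toFinset.1 hx))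
  simpa using this

lemma reduce_w_eq_sum_walkSum (hS : IsStructuralSet G S) {i j : V} (hi : i ∈ S) (hj : j ∈ S) :
    (G.reduce S).w i j = ∑ m ∈ range (#(G.verts \ S) + 1), G.walkSum (G.verts \ S) j m i := by
  have hunion : {β | IsBranch G S i j β} =
      ⋃ m ∈ (range (#(G.verts \ S) + 1) : Set ℕ),
        {β | IsBranch G S i j β ∧ β.length = m + 2} := by
    ext β
    simp only [Set.mem_ofPred_eq, Set.mem_iUnion, coe_range, Set.mem_Iio, exists_prop]
    refine ⟨fun hβ => ⟨β.length - 2, ?_, hβ, ?_⟩, fun ⟨_, _, hβ, _⟩ => hβ⟩ <;>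
    · obtain ⟨-, -, L, rfl, -⟩ := id hβ
      have := hβ.length_le
      simp only [List.length_cons, List.length_append] at this ⊢
      omega
  show ∑ᶠ β ∈ {β | IsBranch G S i j β}, branchProd G.w β = _
  rw [hunion, finsum_mem_biUnion, finsum_mem_coe_finset]
  · exact sum_congr rfl fun m _ => (walkSum_eq_finsum_isBranch hS hi hj m).symm
  · exact fun m _ m' _ hne => Set.disjoint_left.2 fun _ ⟨_, h⟩ ⟨_, h'⟩ => hne (by omega)
  · exact finite_toSet _
  · exact fun m _ => setOf_isBranch_length_eq_image (G := G) i j m ▸ Set.toFinite _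

lemma schur_complement_apply (hS : IsStructuralSet G S) (i j : S) :
    (G.charBlock S S - G.charBlock S (G.verts \ S) * G.complInv S * G.charBlock (G.verts \ S) S)
      i j = (G.reduce S).charEntry i j := by
  have hprod : G.charBlock S (G.verts \ S) * G.complInv S * G.charBlock (G.verts \ S) S =
      -∑ k ∈ range #(G.verts \ S), G.stepBlock S (G.verts \ S) *
        G.stepBlock (G.verts \ S) (G.verts \ S) ^ k * G.charBlock (G.verts \ S) S := by
    rw [complInv, Matrix.mul_neg, Matrix.neg_mul, ← Matrix.mul_assoc, charBlock_mul_diagonal_inv,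
      Matrix.mul_sum, Matrix.sum_mul]
  rw [Matrix.sub_apply, hprod, Matrix.neg_apply, Matrix.sum_apply, sub_neg_eq_add, charEntry,
    reduce_w_eq_sum_walkSum hS i.2 j.2, sum_range_succ', walkSum_zero]
  simp only [stepBlock_mul_pow_mul_charBlock_apply disjoint_sdiff]
  simp only [charBlock, charEntry, of_apply]
  ring

lemma charDet_reduce_eq_det (hS : IsStructuralSet G S) :
    (G.reduce S).charDet = (G.charBlock S S -
      G.charBlock S (G.verts \ S) * G.complInv S * G.charBlock (G.verts \ S) S).det := by
  rw [charDet]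
  congr 1
  ext i j
  refine Eq.trans ?_ (schur_complement_apply hS i j).symm
  exact congrArg _ (if_congr Subtype.ext_iff rfl rfl)

lemma charDet_eq_det_fromBlocks (hS : S ⊆ G.verts) :
    G.charDet = (fromBlocks (G.charBlock S S) (G.charBlock S (G.verts \ S))
      (G.charBlock (G.verts \ S) S) (G.charBlock (G.verts \ S) (G.verts \ S))).det := by
  let e : S ⊕ ↥(G.verts \ S) ≃ G.verts := (Equiv.Finset.union S _ disjoint_sdiff).trans
    (Equiv.subtypeEquivRight fun x => by rw [union_sdiff_of_subset hS])
  have hdet : G.charDet = (G.charBlock G.verts G.verts).det := by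
    rw [charDet]
    congr 1
    ext a b
    exact congrArg _ (if_congr Subtype.ext_iff rfl rfl)
  rw [hdet, ← det_submatrix_equiv_self e]
  congr 1
  ext (a | a) (b | b) <;> rfl

lemma charDet_eq_prod_mul_charDet_reduce (hS : IsStructuralSet G S) :
    G.charDet = (∏ v : ↥(G.verts \ S), (G.w v v - RatFunc.X)) * (G.reduce S).charDet := by
  have := invertibleOfRightInverse _ _ (charBlock_compl_mul_complInv hS)
  rw [charDet_eq_det_fromBlocks hS.2.1, det_fromBlocks₂₂,
    invOf_eq_right_inv (charBlock_compl_mul_complInv hS), det_charBlock_compl hS,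
    charDet_reduce_eq_det hS]

lemma isUnitAt_w_sub_X_of_notMem_NSet {z : ℂ} (hz : z ∉ NSet G S) {v : V}
    (hv : v ∈ G.verts \ S) :
    (G.w v v - RatFunc.X).IsUnitAt z := by
  obtain ⟨hnum, hdenom⟩ :
      (RatFunc.X - G.w v v).num.eval z ≠ 0 ∧ (G.w v v).denom.eval z ≠ 0 :=
    not_or.1 fun h => hz ⟨v, (mem_sdiff.1 hv).1, (mem_sdiff.1 hv).2, h⟩
  set f := G.w v v
  have hdenom₀ := RatFunc.algebraMap_ne_zero f.denom_ne_zero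
  have h₁ : RatFunc.X - f =
      algebraMap _ _ (Polynomial.X * f.denom - f.num) / algebraMap _ _ f.denom := by
    rw [map_sub, map_mul, sub_div, mul_div_cancel_right₀ _ hdenom₀, RatFunc.algebraMap_X,
      RatFunc.num_div_denom]
  have h₂ : f - RatFunc.X =
      algebraMap _ _ (f.num - Polynomial.X * f.denom) / algebraMap _ _ f.denom := by
    rw [← neg_sub, h₁, ← neg_div, ← map_neg, neg_sub]
  refine RatFunc.isUnitAt_of_eq_div h₂ f.denom_ne_zero ?_ hdenom
  rw [← neg_sub, Polynomial.eval_neg, neg_ne_zero]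
  exact RatFunc.eval_ne_zero_of_eq_div h₁ f.denom_ne_zero hnum hdenom

end WDigraph

theorem spec_reduce_diff_at_most_NSet_general
    (G : WDigraph V) (S : Finset V) (hS : IsStructuralSet G S) :
    SpecDiffAtMost G.spec (G.reduce S).spec (NSet G S) := by
  rw [SpecDiffAtMost, WDigraph.spec, WDigraph.spec,
    WDigraph.charDet_eq_prod_mul_charDet_reduce hS]
  ext z
  simp only [Multiset.count_filter, Polynomial.count_roots]
  split_ifs with hz
  · rfl
  · exact RatFunc.rootMultiplicity_num_mul_of_isUnitAt
      (RatFunc.isUnitAt_prod fun v _ => WDigraph.isUnitAt_w_sub_X_of_notMem_NSet hz v.2)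

/-- **Theorem 1 (Isospectral graph reduction).** Let `G ∈ 𝔾` and `S ∈ st(G)`.
Then `σ(G)` and `σ(R_S(G))` differ at most by `N(G;S)`. -/
theorem spec_reduce_diff_at_most_NSet
    (G : WDigraph V) (hG : G.Wf) (S : Finset V) (hS : IsStructuralSet G S) :
    SpecDiffAtMost G.spec (G.reduce S).spec (NSet G S) :=
  spec_reduce_diff_at_most_NSet_general G S hS
end
end

section
/- (Commutativity of Reductions) Let G ∈ 𝔾_π and suppose the sequences S₁,…,S_m and T₁,…,T_n both induce a sequence of reductions on G. If S_m = T_n then R(G;S₁,…,S_m) = R(G;T₁,…,T_n). -/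
open scoped Classical

noncomputable section

variable {V : Type*} [Fintype V] [DecidableEq V]

/-- `R(G; S₁,…,S_m)`: the result of sequentially reducing `G` over `S₁,…,S_m`. -/
def reduceSeq (G : WDigraph V) : List (Finset V) → WDigraph V
  | [] => G
  | S :: rest => reduceSeq (G.reduce S) rest

/-- `S₁,…,S_m` induces a sequence of reductions on `G`: each `S_{i+1}` is a
structural set of the `i`-th reduction. -/
def InducesSeq (G : WDigraph V) : List (Finset V) → Prop
  | [] => True
  | S :: rest => IsStructuralSet G S ∧ InducesSeq (G.reduce S) rest

/-- The set `N(G; S₁,…,S_m)`, accumulated along the sequence of reductions. -/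
def NSeq (G : WDigraph V) : List (Finset V) → Set ℂ
  | [] => ∅
  | S :: rest => NSet G S ∪ NSeq (G.reduce S) rest

/-! Reducing over `S` eliminates the vertices outside `S` from the linear system
`(M(G) - λ I) y = 0`: because `V ∖ S` carries no cycles, the branch sums obey the first-step
recursion `b(v,s) = ω(v,s) + Σ_{v' ∉ S} ω(v,v') b(v',s) / (λ - ω(v',v'))`, which says that
`M(R_S(G))` is the Schur complement of `M(G) - λ I` onto `S`. Schur complements compose, so the
last graph of any sequence of reductions ending in `T` is a Schur complement of `G` onto `T`.
For `G ∈ 𝔾_π` that complement is unique: every principal submatrix of `M(G) - λ I` is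
invertible, as `λ` is not integral over the ring of rational functions of nonpositive degree
while every eigenvalue of a matrix over that ring is. -/

open Matrix in
theorem Matrix.det_scalar_sub_ne_zero_of_one_lt_valuation {K Γ₀ : Type*} [Field K]
    [LinearOrderedCommGroupWithZero Γ₀] (v : Valuation K Γ₀) {ι : Type*} [Fintype ι]
    [DecidableEq ι] {A : Matrix ι ι K} (hA : ∀ i j, v (A i j) ≤ 1) {x : K} (hx : 1 < v x) :
    (scalar ι x - A).det ≠ 0 := by
  intro h
  let A' : Matrix ι ι v.integer := of fun i j => ⟨A i j, hA i j⟩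
  have hA' : A'.map (algebraMap v.integer K) = A := rfl
  have hint : IsIntegral v.integer x :=
    ⟨A'.charpoly, A'.charpoly_monic, by
      rw [← Polynomial.eval_map, ← charpoly_map, hA', eval_charpoly, h]⟩
  exact hx.not_ge ((Valuation.integer.integers v).isIntegral_iff_v_le_one.mp hint)

theorem RatFunc.inftyValuation_le_one_of_degree_le {K : Type*} [Field K]
    [DecidableEq (RatFunc K)] {f : RatFunc K} (hf : f.num.degree ≤ f.denom.degree) :
    RatFunc.inftyValuation K f ≤ 1 := by
  rcases eq_or_ne f 0 with rfl | h0
  · simp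
  rw [inftyValuation_apply, inftyValuation_of_nonzero (F := K) h0, ← WithZero.exp_zero,
    WithZero.exp_le_exp, intDegree, sub_nonpos, Nat.cast_le]
  exact Polynomial.natDegree_le_natDegree hf

theorem List.IsChain.and {α : Type*} {R R' : α → α → Prop} {l : List α}
    (h : List.IsChain R l) (h' : List.IsChain R' l) :
    List.IsChain (fun a b => R a b ∧ R' a b) l := by
  induction l with
  | nil => exact .nil
  | cons a l ih =>
    cases l with
    | nil => exact .singleton a
    | cons b l =>
      rw [List.isChain_cons_cons] at h h' ⊢
      exact ⟨⟨h.1, h'.1⟩, ih h.2 h'.2⟩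

theorem List.IsChain.transGen_of_mem {α : Type*} {R : α → α → Prop} {a b : α} {l : List α}
    (hl : List.IsChain R (a :: l)) (hb : b ∈ l) : Relation.TransGen R a b := by
  induction l generalizing a with
  | nil => simp at hb
  | cons c l ih =>
    rw [List.isChain_cons_cons] at hl
    rcases List.mem_cons.mp hb with rfl | hb
    · exact .single hl.1
    · exact .head hl.1 (ih hl.2 hb)

namespace WDigraph

open Finset Matrix

theorem Wf.w_eq_zero {G : WDigraph V} (hG : G.Wf) {u v : V}
    (h : ¬(u ∈ G.verts ∧ v ∈ G.verts)) : G.w u v = 0 :=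
  not_imp_comm.mp (hG u v) h

theorem PiNonpos.inftyValuation_le_one {G : WDigraph V} (hG : G.PiNonpos) (u v : V) :
    RatFunc.inftyValuation ℂ (G.w u v) ≤ 1 :=
  RatFunc.inftyValuation_le_one_of_degree_le (hG u v)

theorem _root_.Matrix.mulVec_apply_eq_sum_of_support {ι κ R : Type*} [Fintype κ]
    [NonUnitalNonAssocSemiring R] {M : Matrix ι κ R} {U : Finset κ} {d : κ → R}
    (hd : ∀ v ∉ U, d v = 0) (u : ι) :
    (M *ᵥ d) u = ∑ v ∈ U, M u v * d v :=
  (sum_subset (subset_univ U) fun v _ hv => by rw [hd v hv, mul_zero]).symm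

theorem eq_zero_of_mulVec_eq_X_mul {G : WDigraph V} (hG : G.PiNonpos) {U : Finset V}
    {d : V → RatFunc ℂ} (hd : ∀ v ∉ U, d v = 0)
    (h : ∀ u ∈ U, (of G.w *ᵥ d) u = RatFunc.X * d u) : d = 0 := by
  let A : Matrix U U (RatFunc ℂ) := of fun i j => G.w i j
  have hdet : (scalar U RatFunc.X - A).det ≠ 0 :=
    det_scalar_sub_ne_zero_of_one_lt_valuation _ (A := A) (fun i j => hG.inftyValuation_le_one _ _)
      (by rw [RatFunc.inftyValuation.X, ← WithZero.exp_zero, WithZero.exp_lt_exp]; norm_num)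
  have hker : (scalar U RatFunc.X - A) *ᵥ (fun i : U => d i) = 0 := by
    funext i
    rw [sub_mulVec, Pi.sub_apply, scalar_apply, mulVec_diagonal, ← h i i.2,
      mulVec_apply_eq_sum_of_support hd, ← sum_coe_sort U]
    exact sub_self _
  have hU := eq_zero_of_mulVec_eq_zero hdet hker
  funext v
  by_cases hv : v ∈ U
  · exact congrFun hU ⟨v, hv⟩
  · exact hd v hv

variable (G : WDigraph V) (S : Finset V)

/-- A branch from `v` to `s` with respect to `S`, except that `v` need not lie in `S`. -/
def IsHalfBranch (v s : V) (β : List V) : Prop :=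
  s ∈ S ∧ ∃ int : List V, β = v :: (int ++ [s]) ∧
    (∀ x ∈ int, x ∈ G.verts ∧ x ∉ S) ∧ (v :: int).Nodup ∧ s ∉ int ∧
    List.IsChain (fun a b => G.w a b ≠ 0) β

theorem isBranch_iff {u v : V} {β : List V} :
    IsBranch G S u v β ↔ u ∈ S ∧ G.IsHalfBranch S u v β :=
  Iff.rfl

theorem finite_setOf_isHalfBranch (v s : V) : {β | G.IsHalfBranch S v s β}.Finite := by
  refine (List.finite_length_le V (Fintype.card V + 2)).subset ?_
  rintro _ ⟨-, int, rfl, -, hnd, -, -⟩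
  have := hnd.of_cons.length_le_card
  simp only [Set.mem_ofPred_eq, List.length_cons, List.length_append, List.length_nil]
  omega

def halfBranches (v s : V) : Finset (List V) :=
  (G.finite_setOf_isHalfBranch S v s).toFinset

def halfBranchSum (v s : V) : RatFunc ℂ :=
  ∑ β ∈ G.halfBranches S v s, branchProd G.w β

variable {G S}

@[simp]
theorem mem_halfBranches {v s : V} {β : List V} :
    β ∈ G.halfBranches S v s ↔ G.IsHalfBranch S v s β :=
  Set.Finite.mem_toFinset _

theorem reduce_w (u v : V) :
    (G.reduce S).w u v = if u ∈ S then G.halfBranchSum S u v else 0 := by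
  change ∑ᶠ β ∈ {β | IsBranch G S u v β}, branchProd G.w β = _
  split_ifs with hu
  · simp only [isBranch_iff, hu, true_and]
    exact finsum_mem_eq_finite_toFinset_sum _ _
  · exact finsum_mem_of_eqOn_zero fun β hβ => (hu hβ.1).elim

theorem reduce_wf : (G.reduce S).Wf := by
  intro u v h
  by_contra hc
  exact h (finsum_mem_of_eqOn_zero fun β hβ => (hc ⟨hβ.1, hβ.2.1⟩).elim)

theorem IsHalfBranch.eq_cons_tail {v s : V} {β : List V} (hβ : G.IsHalfBranch S v s β) :
    β = v :: β.tail := by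
  obtain ⟨-, int, rfl, -⟩ := hβ
  rfl

theorem IsHalfBranch.branchProd_cons {v s : V} {β : List V} (hβ : G.IsHalfBranch S v s β)
    (u : V) : branchProd G.w (u :: β) = G.w u v * branchProd G.w β / (RatFunc.X - G.w v v) := by
  obtain ⟨-, int, rfl, -⟩ := hβ
  cases int <;> rfl

theorem isHalfBranch_pair_iff {v s : V} :
    G.IsHalfBranch S v s [v, s] ↔ s ∈ S ∧ G.w v s ≠ 0 := by
  refine ⟨fun ⟨hs, _, _, _, _, _, hch⟩ => ⟨hs, by simpa using hch⟩,
    fun ⟨hs, hw⟩ => ⟨hs, [], rfl, by simpa using hw⟩⟩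

theorem IsHalfBranch.tail {v s : V} {β : List V} (hβ : G.IsHalfBranch S v s β)
    (hne : β ≠ [v, s]) : ∃ v' ∈ (G.verts \ S).erase v, G.IsHalfBranch S v' s β.tail := by
  obtain ⟨hs, int, rfl, hint, hnd, hsi, hch⟩ := hβ
  cases int with
  | nil => exact absurd rfl hne
  | cons v' l =>
    have hv' := hint v' (List.mem_cons_self ..)
    refine ⟨v', mem_erase.mpr ⟨?_, mem_sdiff.mpr hv'⟩, hs, l, rfl,
      fun x hx => hint x (List.mem_cons_of_mem _ hx), hnd.of_cons,
      fun h => hsi (List.mem_cons_of_mem _ h), hch.tail⟩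
    rintro rfl
    exact (List.nodup_cons.mp hnd).1 (List.mem_cons_self ..)

theorem IsHalfBranch.cons (hS : IsStructuralSet G S) {v v' s : V} {β : List V}
    (hβ : G.IsHalfBranch S v' s β) (hv' : v' ∈ (G.verts \ S).erase v) (hw : G.w v v' ≠ 0) :
    G.IsHalfBranch S v s (v :: β) := by
  obtain ⟨hs, l, rfl, hl, hnd, hsl, hch⟩ := hβ
  obtain ⟨hvv', hv'C⟩ := mem_erase.mp hv'
  have hint : ∀ x ∈ v' :: l, x ∈ G.verts ∧ x ∉ S :=
    List.forall_mem_cons.mpr ⟨mem_sdiff.mp hv'C, hl⟩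
  have hvl : v ∉ v' :: l := by
    intro hv
    have hW : List.IsChain (fun a b => G.w a b ≠ 0) (v :: v' :: l) :=
      List.isChain_cons_cons.mpr ⟨hw, hch.prefix ⟨[s], rfl⟩⟩
    have hN : List.IsChain (· ≠ ·) (v :: v' :: l) :=
      List.isChain_cons_cons.mpr ⟨hvv'.symm, hnd.isChain⟩
    have hvv := hW.and hN
    refine hS.2.2.1 v (List.IsChain.transGen_of_mem (hvv.imp_of_mem_imp ?_) hv)
    intro a b ha hb ⟨hab, hne⟩
    have hmem : ∀ x ∈ v :: v' :: l, x ∈ G.verts ∧ x ∉ S :=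
      List.forall_mem_cons.mpr ⟨hint v hv, hint⟩
    exact ⟨(hmem a ha).1, (hmem b hb).1, (hmem a ha).2, (hmem b hb).2, hne, hab⟩
  refine ⟨hs, v' :: l, rfl, hint, List.nodup_cons.mpr ⟨hvl, hnd⟩, ?_,
    List.isChain_cons_cons.mpr ⟨hw, hch⟩⟩
  intro h
  rcases List.mem_cons.mp h with rfl | h
  · exact (mem_sdiff.mp hv'C).2 hs
  · exact hsl h

theorem halfBranchSum_eq_add_sum (hS : IsStructuralSet G S) {s : V} (hs : s ∈ S) (v : V) :
    G.halfBranchSum S v s = G.w v s + ∑ v' ∈ (G.verts \ S).erase v,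
      G.w v v' * G.halfBranchSum S v' s / (RatFunc.X - G.w v' v') := by
  rw [halfBranchSum, ← sum_filter_add_sum_filter_not _ (· = [v, s])]
  congr 1
  · rw [sum_filter, sum_ite_eq']
    split_ifs with h
    · rfl
    · rw [mem_halfBranches, isHalfBranch_pair_iff] at h
      exact (not_not.mp fun hw => h ⟨hs, hw⟩).symm
  symm
  calc ∑ v' ∈ (G.verts \ S).erase v, G.w v v' * G.halfBranchSum S v' s / (RatFunc.X - G.w v' v')
      = ∑ p ∈ ((G.verts \ S).erase v).sigma (G.halfBranches S · s),
          branchProd G.w (v :: p.2) := by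
        rw [sum_sigma]
        refine sum_congr rfl fun v' _ => ?_
        rw [halfBranchSum, mul_sum, sum_div]
        exact sum_congr rfl fun β hβ => ((mem_halfBranches.mp hβ).branchProd_cons v).symm
    _ = _ := by
      refine sum_bij_ne_zero (fun p _ _ => v :: p.2) ?_ ?_ ?_ fun _ _ _ => rfl
      · rintro ⟨v', β⟩ hp hne
        obtain ⟨hv', hβ⟩ := mem_sigma.mp hp
        rw [mem_halfBranches] at hβ
        dsimp only at hv' hβ hne ⊢
        have hw : G.w v v' ≠ 0 := fun h => hne (by
          rw [hβ.branchProd_cons, h, zero_mul, zero_div])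
        refine mem_filter.mpr ⟨mem_halfBranches.mpr (hβ.cons hS hv' hw), ?_⟩
        obtain ⟨-, l, rfl, -⟩ := hβ
        simp
      · rintro ⟨a, β⟩ hp _ ⟨a', β'⟩ hp' _ h
        obtain rfl : β = β' := List.cons_injective h
        have ha := (mem_halfBranches.mp (mem_sigma.mp hp).2).eq_cons_tail
        have ha' := (mem_halfBranches.mp (mem_sigma.mp hp').2).eq_cons_tail
        obtain rfl : a = a' := List.head_eq_of_cons_eq (ha.symm.trans ha')
        rfl
      · intro β hβ hne
        obtain ⟨hβ, hpair⟩ := mem_filter.mp hβ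
        rw [mem_halfBranches] at hβ
        obtain ⟨v', hv', ht⟩ := hβ.tail hpair
        exact ⟨⟨v', β.tail⟩, mem_sigma.mpr ⟨hv', mem_halfBranches.mpr ht⟩,
          by rwa [← hβ.eq_cons_tail], hβ.eq_cons_tail.symm⟩

theorem sum_halfBranchSum_mul (hS : IsStructuralSet G S) (x : V → RatFunc ℂ) (u : V) :
    ∑ s ∈ S, G.halfBranchSum S u s * x s = ∑ s ∈ S, G.w u s * x s +
      ∑ v ∈ (G.verts \ S).erase u,
        G.w u v * ((∑ s ∈ S, G.halfBranchSum S v s * x s) / (RatFunc.X - G.w v v)) := by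
  rw [sum_congr rfl fun s hs => by rw [halfBranchSum_eq_add_sum hS hs u, add_mul, sum_mul],
    sum_add_distrib, sum_comm]
  congr 1
  refine sum_congr rfl fun v _ => ?_
  rw [sum_div, mul_sum]
  exact sum_congr rfl fun _ _ => by ring

/-- `M(H)` is the Schur complement of `M(G) - λ I` onto `H.verts`: every vector `x` supported
on `H.verts` extends, by some `z` supported on the eliminated vertices, to a solution of
`(M(G) - λ I) (x + z) = 0` off `H.verts`, and `M(H) x` agrees with `M(G) (x + z)` on `H.verts`. -/
structure IsSchurReduction (G H : WDigraph V) : Prop where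
  verts_subset : H.verts ⊆ G.verts
  wf : H.Wf
  exists_extension : ∀ x : V → RatFunc ℂ, (∀ v ∉ H.verts, x v = 0) →
    ∃ z : V → RatFunc ℂ, (∀ v ∉ G.verts \ H.verts, z v = 0) ∧
      (∀ u ∈ G.verts \ H.verts, (of G.w *ᵥ (x + z)) u = RatFunc.X * z u) ∧
      ∀ u ∈ H.verts, (of H.w *ᵥ x) u = (of G.w *ᵥ (x + z)) u

theorem isSchurReduction_reduce (hS : IsStructuralSet G S) : IsSchurReduction G (G.reduce S) := by
  refine ⟨hS.2.1, reduce_wf, fun x (hx : ∀ v ∉ S, x v = 0) => ?_⟩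
  set C := G.verts \ S
  let y : V → RatFunc ℂ := fun u => ∑ s ∈ S, G.halfBranchSum S u s * x s
  let z : V → RatFunc ℂ := fun u => if u ∈ C then y u / (RatFunc.X - G.w u u) else 0
  have hz : ∀ v ∉ C, z v = 0 := fun v hv => if_neg hv
  have hGxz : ∀ u,
      (of G.w *ᵥ (x + z)) u = ∑ s ∈ S, G.w u s * x s + ∑ v ∈ C, G.w u v * z v := by
    intro u
    rw [mulVec_add, Pi.add_apply, mulVec_apply_eq_sum_of_support hx,
      mulVec_apply_eq_sum_of_support hz]
    rfl
  have hy : ∀ u, y u = ∑ s ∈ S, G.w u s * x s + ∑ v ∈ C.erase u, G.w u v * z v := by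
    intro u
    rw [show y u = _ from sum_halfBranchSum_mul hS x u]
    congr 1
    refine sum_congr rfl fun v hv => ?_
    simp only [z, if_pos (mem_of_mem_erase hv)]
    rfl
  refine ⟨z, hz, fun u (hu : u ∈ C) => ?_, fun u (hu : u ∈ S) => ?_⟩
  · have hne : RatFunc.X - G.w u u ≠ 0 :=
      sub_ne_zero.mpr (hS.2.2.2 u (mem_sdiff.mp hu).1 (mem_sdiff.mp hu).2).symm
    have hyz : y u = (RatFunc.X - G.w u u) * z u := by
      simp only [z, if_pos hu]
      rw [mul_div_cancel₀ _ hne]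
    rw [hGxz, ← add_sum_erase _ _ hu]
    linear_combination hyz - hy u
  · have huC : u ∉ C := fun h => (mem_sdiff.mp h).2 hu
    rw [mulVec_apply_eq_sum_of_support hx, hGxz, ← erase_eq_of_notMem huC, ← hy]
    simp [reduce_w, hu, y]

theorem IsSchurReduction.trans {G H K : WDigraph V} (h₁ : IsSchurReduction G H)
    (h₂ : IsSchurReduction H K) : IsSchurReduction G K := by
  refine ⟨h₂.verts_subset.trans h₁.verts_subset, h₂.wf, fun x hx => ?_⟩
  obtain ⟨w, hw, hwH, hwK⟩ := h₂.exists_extension x hx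
  have hxw : ∀ v ∉ H.verts, (x + w) v = 0 := fun v hv => by
    rw [Pi.add_apply, hx v fun h => hv (h₂.verts_subset h),
      hw v fun h => hv (mem_sdiff.mp h).1, add_zero]
  obtain ⟨z, hz, hzG, hzH⟩ := h₁.exists_extension (x + w) hxw
  refine ⟨w + z, fun v hv => ?_, fun u hu => ?_, fun u hu => ?_⟩
  · rw [mem_sdiff, not_and_or, not_not] at hv
    rw [Pi.add_apply, hw v (by grind [h₁.verts_subset]), hz v (by grind [h₂.verts_subset]),
      add_zero]
  · rw [← add_assoc]
    obtain ⟨huG, huK⟩ := mem_sdiff.mp hu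
    by_cases huH : u ∈ H.verts
    · rw [← hzH u huH, hwH u (mem_sdiff.mpr ⟨huH, huK⟩), Pi.add_apply,
        hz u fun h => (mem_sdiff.mp h).2 huH, add_zero]
    · rw [hzG u (mem_sdiff.mpr ⟨huG, huH⟩), Pi.add_apply,
        hw u fun h => huH (mem_sdiff.mp h).1, zero_add]
  · rw [hwK u hu, hzH u (h₂.verts_subset hu), add_assoc]

theorem IsSchurReduction.eq_of_verts_eq (hG : G.PiNonpos) {H₁ H₂ : WDigraph V}
    (h₁ : IsSchurReduction G H₁) (h₂ : IsSchurReduction G H₂)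
    (hv : H₁.verts = H₂.verts) :
    H₁ = H₂ := by
  have hrow : ∀ x : V → RatFunc ℂ, (∀ v ∉ H₁.verts, x v = 0) →
      ∀ u ∈ H₁.verts, (of H₁.w *ᵥ x) u = (of H₂.w *ᵥ x) u := by
    intro x hx u hu
    obtain ⟨z₁, hz₁, hGz₁, hHz₁⟩ := h₁.exists_extension x hx
    obtain ⟨z₂, hz₂, hGz₂, hHz₂⟩ := h₂.exists_extension x (hv ▸ hx)
    rw [← hv] at hz₂ hGz₂ hHz₂
    have hz : z₁ - z₂ = 0 := by
      refine eq_zero_of_mulVec_eq_X_mul hG (fun v hv => by rw [Pi.sub_apply, hz₁ v hv,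
        hz₂ v hv, sub_zero]) fun u hu => ?_
      rw [show z₁ - z₂ = (x + z₁) - (x + z₂) by abel, mulVec_sub, Pi.sub_apply, hGz₁ u hu,
        hGz₂ u hu]
      simp only [Pi.sub_apply, Pi.add_apply]
      ring
    rw [hHz₁ u hu, hHz₂ u hu, sub_eq_zero.mp hz]
  suffices hw : H₁.w = H₂.w by
    cases H₁; cases H₂; cases hv; cases hw; rfl
  funext u t
  by_cases hut : u ∈ H₁.verts ∧ t ∈ H₁.verts
  · simpa using hrow (Pi.single t 1)
      (fun v hv => Pi.single_eq_of_ne (by rintro rfl; exact hv hut.2) 1) u hut.1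
  · rw [h₁.wf.w_eq_zero hut, h₂.wf.w_eq_zero (hv ▸ hut)]

theorem isSchurReduction_reduceSeq :
    ∀ {G : WDigraph V} {L : List (Finset V)}, InducesSeq G L → L ≠ [] →
      IsSchurReduction G (reduceSeq G L)
  | _, [], _, hne => (hne rfl).elim
  | _, [_], h, _ => isSchurReduction_reduce h.1
  | _, _ :: T :: L, h, _ =>
    (isSchurReduction_reduce h.1).trans (isSchurReduction_reduceSeq h.2 (List.cons_ne_nil T L))

theorem verts_reduceSeq :
    ∀ {G : WDigraph V} {L : List (Finset V)} (hL : L ≠ []), (reduceSeq G L).verts = L.getLast hL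
  | _, [], hne => (hne rfl).elim
  | _, [_], _ => rfl
  | _, _ :: T :: L, _ => verts_reduceSeq (List.cons_ne_nil T L)

end WDigraph

theorem reduceSeq_comm_general
    (G : WDigraph V) (hpi : G.PiNonpos)
    (L₁ L₂ : List (Finset V)) (h₁ : L₁ ≠ []) (h₂ : L₂ ≠ [])
    (hL₁ : InducesSeq G L₁) (hL₂ : InducesSeq G L₂)
    (hlast : L₁.getLast h₁ = L₂.getLast h₂) :
    reduceSeq G L₁ = reduceSeq G L₂ :=
  (WDigraph.isSchurReduction_reduceSeq hL₁ h₁).eq_of_verts_eq hpi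
    (WDigraph.isSchurReduction_reduceSeq hL₂ h₂)
    (by rw [WDigraph.verts_reduceSeq h₁, WDigraph.verts_reduceSeq h₂, hlast])

/-- **Theorem (Commutativity of Reductions).** For `G ∈ 𝔾_π`, if `S₁,…,S_m` and
`T₁,…,T_n` both induce sequences of reductions on `G` with `S_m = T_n`, then
`R(G;S₁,…,S_m) = R(G;T₁,…,T_n)`. -/
theorem reduceSeq_comm
    (G : WDigraph V) (hG : G.Wf) (hpi : G.PiNonpos)
    (L₁ L₂ : List (Finset V)) (h₁ : L₁ ≠ []) (h₂ : L₂ ≠ [])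
    (hL₁ : InducesSeq G L₁) (hL₂ : InducesSeq G L₂)
    (hlast : L₁.getLast h₁ = L₂.getLast h₂) :
    reduceSeq G L₁ = reduceSeq G L₂ :=
  reduceSeq_comm_general G hpi L₁ L₂ h₁ h₂ hL₁ hL₂ hlast
end
end

section
/- If G = (V,E,ω) is a graph in 𝔾_π and S ∈ st(G), then R_S(G) ∈ 𝔾_π. Moreover, if V = {v₁,…,v_n} with n ≥ 2, then V∖{v_i} ∈ st(G) for every 1 ≤ i ≤ n. -/
open scoped Classical

noncomputable section

variable {V : Type*} [Fintype V] [DecidableEq V]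

section Aux

open RatFunc Polynomial

/-- The `π ≤ 0` condition on a single rational function. -/
def Pp (f : RatFunc ℂ) : Prop := f.num.degree ≤ f.denom.degree

lemma Pp_zero : Pp (0 : RatFunc ℂ) := by
  simp [Pp]

lemma Pp.intDegree_le {f : RatFunc ℂ} (hf : Pp f) (h0 : f ≠ 0) : f.intDegree ≤ 0 := by
  have hn : f.num ≠ 0 := RatFunc.num_ne_zero h0
  have hd : f.denom ≠ 0 := f.denom_ne_zero
  rw [Pp, Polynomial.degree_eq_natDegree hn, Polynomial.degree_eq_natDegree hd] at hf
  have : f.num.natDegree ≤ f.denom.natDegree := by exact_mod_cast hf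
  simp only [RatFunc.intDegree, sub_nonpos]
  exact_mod_cast this

lemma Pp_of_intDegree_le {f : RatFunc ℂ} (hf : f.intDegree ≤ 0) : Pp f := by
  by_cases h0 : f = 0
  · simp [h0, Pp_zero]
  · have hn : f.num ≠ 0 := RatFunc.num_ne_zero h0
    have hd : f.denom ≠ 0 := f.denom_ne_zero
    rw [Pp, Polynomial.degree_eq_natDegree hn, Polynomial.degree_eq_natDegree hd]
    rw [RatFunc.intDegree, sub_nonpos] at hf
    exact_mod_cast hf

lemma Pp.add {f g : RatFunc ℂ} (hf : Pp f) (hg : Pp g) : Pp (f + g) := by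
  by_cases h0 : f = 0
  · simpa [h0] using hg
  by_cases h1 : g = 0
  · simpa [h1] using hf
  by_cases h2 : f + g = 0
  · simp [h2, Pp_zero]
  refine Pp_of_intDegree_le ?_
  calc (f + g).intDegree ≤ max f.intDegree g.intDegree := RatFunc.intDegree_add_le h1 h2
    _ ≤ 0 := max_le (hf.intDegree_le h0) (hg.intDegree_le h1)

lemma Pp.mul {f g : RatFunc ℂ} (hf : Pp f) (hg : Pp g) : Pp (f * g) := by
  by_cases h0 : f = 0
  · simp [h0, Pp_zero]
  by_cases h1 : g = 0
  · simp [h1, Pp_zero]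
  refine Pp_of_intDegree_le ?_
  rw [RatFunc.intDegree_mul h0 h1]
  have := hf.intDegree_le h0
  have := hg.intDegree_le h1
  omega

lemma Pp.ne_X {f : RatFunc ℂ} (hf : Pp f) : f ≠ RatFunc.X := by
  rintro rfl
  rw [Pp, RatFunc.num_X, RatFunc.denom_X, Polynomial.degree_X, Polynomial.degree_one] at hf
  exact absurd hf (by norm_num)

lemma X_sub_ne_zero {f : RatFunc ℂ} (hf : Pp f) : RatFunc.X - f ≠ 0 := by
  intro h
  exact hf.ne_X (by linear_combination -h)

lemma one_le_intDegree_X_sub {f : RatFunc ℂ} (hf : Pp f) :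
    1 ≤ (RatFunc.X - f).intDegree := by
  by_cases h0 : f = 0
  · simp [h0, RatFunc.intDegree_X]
  have hX : (RatFunc.X : RatFunc ℂ) ≠ 0 := by
    intro h
    have := RatFunc.intDegree_X (K := ℂ)
    rw [h, RatFunc.intDegree_zero] at this
    exact absurd this (by norm_num)
  have hxy : (RatFunc.X - f) + f ≠ 0 := by
    rw [sub_add_cancel]; exact hX
  have h1 : ((RatFunc.X - f) + f).intDegree = 1 := by
    rw [sub_add_cancel, RatFunc.intDegree_X]
  have hle := RatFunc.intDegree_add_le h0 hxy
  rw [h1] at hle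
  have hf0 := hf.intDegree_le h0
  rcases max_cases (RatFunc.X - f).intDegree f.intDegree with ⟨h, _⟩ | ⟨h, _⟩ <;> omega

lemma Pp.div_X_sub {f g : RatFunc ℂ} (hf : Pp f) (hg : Pp g) :
    Pp (f / (RatFunc.X - g)) := by
  by_cases h0 : f = 0
  · simp [h0, Pp_zero]
  have hd : RatFunc.X - g ≠ 0 := X_sub_ne_zero hg
  have hdi : (RatFunc.X - g)⁻¹ ≠ 0 := inv_ne_zero hd
  have hinv : (RatFunc.X - g)⁻¹.intDegree = -(RatFunc.X - g).intDegree := by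
    have := RatFunc.intDegree_mul hd hdi
    rw [mul_inv_cancel₀ hd, RatFunc.intDegree_one] at this
    omega
  refine Pp_of_intDegree_le ?_
  rw [div_eq_mul_inv, RatFunc.intDegree_mul h0 hdi, hinv]
  have h1 := one_le_intDegree_X_sub hg
  have h2 := hf.intDegree_le h0
  omega

lemma Pp_branchProd {w : V → V → RatFunc ℂ} (hw : ∀ a b, Pp (w a b)) :
    ∀ β : List V, Pp (branchProd w β)
  | [] => Pp_zero
  | [_] => Pp_zero
  | [a, b] => hw a b
  | a :: b :: c :: rest => by
      have ih := Pp_branchProd hw (b :: c :: rest)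
      exact ((hw a b).mul ih).div_X_sub (hw b b)

end Aux

/-- **Lemma 3.** If `G ∈ 𝔾_π` and `S ∈ st(G)` then `R_S(G) ∈ 𝔾_π`. Moreover, if
`G` has at least two vertices then removing any single vertex yields a structural
set of `G`. -/
theorem reduce_mem_GPi_and_erase_structural
    (G : WDigraph V) (hG : G.Wf) (hpi : G.PiNonpos) :
    (∀ S : Finset V, IsStructuralSet G S →
      (G.reduce S).Wf ∧ (G.reduce S).PiNonpos) ∧
    (2 ≤ G.verts.card → ∀ v ∈ G.verts, IsStructuralSet G (G.verts.erase v)) := by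
  constructor
  · intro S hS
    obtain ⟨hne, hsub, hcyc, hloop⟩ := hS
    have hfin : ∀ u v : V, {β : List V | IsBranch G S u v β}.Finite := by
      intro u v
      refine (List.finite_length_le V (Fintype.card V + 1)).subset ?_
      rintro β ⟨hu, hv, int, rfl, hint, hnd, hvn, hch⟩
      have hlen : (u :: int).length ≤ Fintype.card V := hnd.length_le_card
      simp only [Set.mem_setOf_eq, List.length_cons, List.length_append,
        List.length_singleton, List.length_nil]
      simp only [List.length_cons] at hlen
      omega
    constructor
    · intro u v huv
      have hu : u ∈ S := by
        by_contra hu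
        apply huv
        have he : {β : List V | IsBranch G S u v β} = ∅ := by
          ext β
          simp only [Set.mem_setOf_eq, Set.mem_empty_iff_false, iff_false]
          rintro ⟨h1, _⟩; exact hu h1
        show (∑ᶠ β ∈ {β : List V | IsBranch G S u v β}, branchProd G.w β) = 0
        rw [he, finsum_mem_empty]
      have hv : v ∈ S := by
        by_contra hv
        apply huv
        have he : {β : List V | IsBranch G S u v β} = ∅ := by
          ext β
          simp only [Set.mem_setOf_eq, Set.mem_empty_iff_false, iff_false]
          rintro ⟨_, h2, _⟩; exact hv h2
        show (∑ᶠ β ∈ {β : List V | IsBranch G S u v β}, branchProd G.w β) = 0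
        rw [he, finsum_mem_empty]
      exact ⟨hu, hv⟩
    · intro u v
      show Pp (∑ᶠ β ∈ {β : List V | IsBranch G S u v β}, branchProd G.w β)
      rw [finsum_mem_eq_finite_toFinset_sum _ (hfin u v)]
      refine Finset.sum_induction _ Pp (fun a b ha hb => ha.add hb) Pp_zero ?_
      intro β _
      exact Pp_branchProd (fun a b => hpi a b) β
  · intro hcard v hv
    refine ⟨?_, Finset.erase_subset _ _, ?_, ?_⟩
    · rw [← Finset.card_pos, Finset.card_erase_of_mem hv]
      omega
    · intro x hx
      have hrel : ∀ a b : V, ¬ (a ∈ G.verts ∧ b ∈ G.verts ∧ a ∉ G.verts.erase v ∧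
          b ∉ G.verts.erase v ∧ a ≠ b ∧ G.w a b ≠ 0) := by
        rintro a b ⟨ha, hb, has, hbs, hne, -⟩
        apply hne
        have ha' : a = v := by
          by_contra h
          exact has (Finset.mem_erase.mpr ⟨h, ha⟩)
        have hb' : b = v := by
          by_contra h
          exact hbs (Finset.mem_erase.mpr ⟨h, hb⟩)
        rw [ha', hb']
      cases hx with
      | single h => exact hrel _ _ h
      | tail _ h => exact hrel _ _ h
    · intro x _ _ heq
      have := hpi x x
      rw [heq, RatFunc.num_X, RatFunc.denom_X, Polynomial.degree_X,
        Polynomial.degree_one] at this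
      exact absurd this (by norm_num)
end
end

section
/- Let G ∈ 𝔾_π with vertex set V = {v₁,…,v_n}, n > 2. For any 1 ≤ i < n and any permutation ρ of {1,…,i}, R̄(G; v₁,…,v_i) = R̄(G; v_{ρ(1)},…,v_{ρ(i)}). -/
open scoped Classical

noncomputable section

variable {V : Type*} [Fintype V] [DecidableEq V]

/-- `R̄(G; v₁,…,v_i)`: sequential removal of single vertices, where
`R̄(G;v) = R_{V∖{v}}(G)`. -/
def removeSeq (G : WDigraph V) : List V → WDigraph V
  | [] => G
  | v :: rest => removeSeq (G.reduce (G.verts.erase v)) rest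

/-!
Removing a vertex `v` replaces each weight `ω(a, b)` by `ω(a, b) + ω(a, v) ω(v, b) / (λ - ω(v, v))`:
it is one step of Gaussian elimination on `M(G) - λ I`. Two such steps commute, since either
order computes the Schur complement of the `2 × 2` block of the removed vertices. This needs
`λ - ω(v, v)` and the determinant of that block to be nonzero, which holds because the entries of
a graph in `𝔾_π` lie in the valuation ring of the place at infinity of `ℂ(λ)`, and this property
survives elimination. Adjacent transpositions then give every permutation.
-/

namespace RatFunc

open Polynomial WithZero

variable {F : Type*} [Field F] [DecidableEq (RatFunc F)]

theorem degree_num_le_degree_denom_iff (f : RatFunc F) :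
    f.num.degree ≤ f.denom.degree ↔ f ∈ (inftyValuation F).integer := by
  rcases eq_or_ne f 0 with rfl | hf
  · simp
  rw [Valuation.mem_integer_iff, inftyValuation_apply, inftyValuation_of_nonzero F hf, ← exp_zero,
    exp_le_exp, intDegree, sub_nonpos, degree_eq_natDegree (num_ne_zero hf),
    degree_eq_natDegree f.denom_ne_zero]
  exact_mod_cast Iff.rfl

private theorem one_lt_exp {n : ℤ} (hn : 0 < n) : (1 : ℤᵐ⁰) < exp n := by
  rwa [← exp_zero, exp_lt_exp]

theorem inftyValuation_X_sub {a : RatFunc F} (ha : a ∈ (inftyValuation F).integer) :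
    inftyValuation F (X - a) = exp 1 := by
  have hlt : inftyValuation F a < inftyValuation F X :=
    (ha.trans_lt (one_lt_exp one_pos)).trans_eq (inftyValuation.X F).symm
  rw [Valuation.map_sub_eq_of_lt_left _ hlt, inftyValuation.X]

theorem X_sub_ne_zero {a : RatFunc F} (ha : a ∈ (inftyValuation F).integer) : X - a ≠ 0 :=
  (inftyValuation F).ne_zero_iff.1 (by rw [inftyValuation_X_sub ha]; exact exp_ne_zero)

theorem div_X_sub_mem_integer {b d : RatFunc F} (hb : b ∈ (inftyValuation F).integer)
    (hd : d ∈ (inftyValuation F).integer) : b / (X - d) ∈ (inftyValuation F).integer := by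
  rw [Valuation.mem_integer_iff, map_div₀, inftyValuation_X_sub hd, div_le_one₀ exp_pos]
  exact hb.trans (one_lt_exp one_pos).le

theorem X_sub_mul_X_sub_sub_ne_zero {a b c : RatFunc F} (ha : a ∈ (inftyValuation F).integer)
    (hb : b ∈ (inftyValuation F).integer) (hc : c ∈ (inftyValuation F).integer) :
    (X - a) * (X - b) - c ≠ 0 := by
  have hab : inftyValuation F ((X - a) * (X - b)) = exp 2 := by
    rw [map_mul, inftyValuation_X_sub ha, inftyValuation_X_sub hb, ← exp_add]; rfl
  rw [← (inftyValuation F).ne_zero_iff,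
    Valuation.map_sub_eq_of_lt_left _ (hab ▸ hc.trans_lt (one_lt_exp two_pos)), hab]
  exact exp_ne_zero

end RatFunc

-- Both sides are the `(a, b)` entry of the Schur complement of the `{x, y}` block of `M - X • 1`,
-- computed by eliminating `x` first or `y` first.
theorem schur_elim_comm {K : Type*} [Field K] {X wab wax wxb way wyb wxy wyx wxx wyy : K}
    (hx : X - wxx ≠ 0) (hy : X - wyy ≠ 0) (hxy : (X - wxx) * (X - wyy) - wxy * wyx ≠ 0) :
    wab + wax * wxb / (X - wxx)
      + (way + wax * wxy / (X - wxx)) * (wyb + wyx * wxb / (X - wxx))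
        / (X - (wyy + wyx * wxy / (X - wxx)))
    = wab + way * wyb / (X - wyy)
      + (wax + way * wyx / (X - wyy)) * (wxb + wxy * wyb / (X - wyy))
        / (X - (wxx + wxy * wyx / (X - wyy))) := by
  have ex : X - (wyy + wyx * wxy / (X - wxx))
      = ((X - wxx) * (X - wyy) - wxy * wyx) / (X - wxx) := by
    field_simp; ring
  have ey : X - (wxx + wxy * wyx / (X - wyy))
      = ((X - wxx) * (X - wyy) - wxy * wyx) / (X - wyy) := by
    field_simp; ring
  rw [ex, ey]
  field_simp
  ring

theorem branchProd_ne_zero_isChain {α : Type*} (w : α → α → RatFunc ℂ) :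
    ∀ {β : List α}, branchProd w β ≠ 0 → β.IsChain (fun a b => w a b ≠ 0)
  | [], _ | [_], _ => by simp
  | [a, b], h => by simpa [branchProd] using h
  | a :: b :: c :: rest, h => by
    simp only [branchProd, ne_eq, div_eq_zero_iff, mul_eq_zero, not_or] at h
    exact .cons_cons h.1.1 (branchProd_ne_zero_isChain w h.1.2)

namespace WDigraph

@[ext]
theorem ext {G H : WDigraph V} (hverts : G.verts = H.verts) (hw : G.w = H.w) : G = H := by
  cases G; cases H; congr

theorem isBranch_erase_iff (G : WDigraph V) {v a b : V} (hv : v ∈ G.verts)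
    (ha : a ∈ G.verts.erase v) (hb : b ∈ G.verts.erase v) (β : List V) :
    IsBranch G (G.verts.erase v) a b β ↔
      (β = [a, b] ∨ β = [a, v, b]) ∧ β.IsChain (fun x y => G.w x y ≠ 0) := by
  constructor
  · rintro ⟨-, -, int, rfl, hint, hnd, -, hchain⟩
    refine ⟨?_, hchain⟩
    have hint_v : ∀ x ∈ int, x = v := fun x hx => by
      by_contra hxv
      exact (hint x hx).2 (Finset.mem_erase.2 ⟨hxv, (hint x hx).1⟩)
    match int, hint_v, (List.nodup_cons.1 hnd).2 with
    | [], _, _ => simp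
    | [x], h, _ => simp [h x (by simp)]
    | x :: y :: _, h, hnd' => simp [h x (by simp), h y (by simp)] at hnd'
  · have hav : a ≠ v := (Finset.mem_erase.1 ha).1
    have hbv : b ≠ v := (Finset.mem_erase.1 hb).1
    rintro ⟨rfl | rfl, hchain⟩
    · exact ⟨ha, hb, [], rfl, by simp, by simp, by simp, hchain⟩
    · refine ⟨ha, hb, [v], rfl, ?_, by simp [hav], by simp [hbv], hchain⟩
      simp [hv]

theorem reduce_w_of_notMem (G : WDigraph V) {S : Finset V} {a b : V} (h : a ∉ S ∨ b ∉ S) :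
    (G.reduce S).w a b = 0 := by
  have hempty : {β : List V | IsBranch G S a b β} = ∅ :=
    Set.eq_empty_of_forall_notMem fun β ⟨ha, hb, _⟩ => h.elim (· ha) (· hb)
  simp only [reduce, hempty, finsum_mem_empty]

-- Only `[a, b]` and `[a, v, b]` can be branches, and each is one whenever its product is nonzero.
theorem reduce_erase_w (G : WDigraph V) {v a b : V} (hv : v ∈ G.verts)
    (ha : a ∈ G.verts.erase v) (hb : b ∈ G.verts.erase v) :
    (G.reduce (G.verts.erase v)).w a b = G.w a b + G.w a v * G.w v b / (RatFunc.X - G.w v v) := by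
  have hsupp : {β | IsBranch G (G.verts.erase v) a b β} ∩ Function.support (branchProd G.w)
      = {[a, b], [a, v, b]} ∩ Function.support (branchProd G.w) := by
    ext β
    simp only [Set.mem_inter_iff, Set.mem_ofPred_eq, Function.mem_support,
      isBranch_erase_iff G hv ha hb, Set.mem_insert_iff, Set.mem_singleton_iff]
    exact ⟨fun h => ⟨h.1.1, h.2⟩, fun h => ⟨⟨h.1, branchProd_ne_zero_isChain G.w h.2⟩, h.2⟩⟩
  have hne : ([a, b] : List V) ≠ [a, v, b] := by simp
  change ∑ᶠ β ∈ {β | IsBranch G (G.verts.erase v) a b β}, branchProd G.w β = _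
  rw [← finsum_mem_inter_support, hsupp, finsum_mem_inter_support, finsum_mem_pair hne]
  rfl

theorem piNonpos_iff {G : WDigraph V} :
    G.PiNonpos ↔ ∀ u v, G.w u v ∈ (RatFunc.inftyValuation ℂ).integer :=
  forall₂_congr fun _ _ => RatFunc.degree_num_le_degree_denom_iff _

theorem PiNonpos.reduce_erase {G : WDigraph V} (hpi : G.PiNonpos) {v : V} (hv : v ∈ G.verts) :
    (G.reduce (G.verts.erase v)).PiNonpos := by
  rw [piNonpos_iff] at hpi ⊢
  intro a b
  by_cases hab : a ∈ G.verts.erase v ∧ b ∈ G.verts.erase v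
  · rw [reduce_erase_w G hv hab.1 hab.2]
    exact add_mem (hpi a b)
      (RatFunc.div_X_sub_mem_integer (mul_mem (hpi a v) (hpi v b)) (hpi v v))
  · rw [reduce_w_of_notMem G (not_and_or.1 hab)]
    exact zero_mem _

theorem removeSeq_pair_comm {G : WDigraph V} (hpi : G.PiNonpos) {x y : V} (hx : x ∈ G.verts)
    (hy : y ∈ G.verts) (hxy : x ≠ y) : removeSeq G [x, y] = removeSeq G [y, x] := by
  rw [piNonpos_iff] at hpi
  have hyx' : y ∈ G.verts.erase x := Finset.mem_erase.2 ⟨hxy.symm, hy⟩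
  have hxy' : x ∈ G.verts.erase y := Finset.mem_erase.2 ⟨hxy, hx⟩
  have hcomm : (G.verts.erase x).erase y = (G.verts.erase y).erase x := Finset.erase_right_comm
  ext1
  · exact hcomm
  funext a b
  simp only [removeSeq]
  by_cases hab : a ∈ (G.verts.erase x).erase y ∧ b ∈ (G.verts.erase x).erase y
  · obtain ⟨ha, hb⟩ := hab
    have ha' := hcomm ▸ ha
    have hb' := hcomm ▸ hb
    have hax := Finset.mem_of_mem_erase ha
    have hbx := Finset.mem_of_mem_erase hb
    have hay := Finset.mem_of_mem_erase ha'
    have hby := Finset.mem_of_mem_erase hb'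
    rw [reduce_erase_w (G.reduce (G.verts.erase x)) hyx' ha hb,
      reduce_erase_w (G.reduce (G.verts.erase y)) hxy' ha' hb',
      reduce_erase_w G hx hax hbx, reduce_erase_w G hx hax hyx', reduce_erase_w G hx hyx' hbx,
      reduce_erase_w G hx hyx' hyx', reduce_erase_w G hy hay hby, reduce_erase_w G hy hay hxy',
      reduce_erase_w G hy hxy' hby, reduce_erase_w G hy hxy' hxy']
    exact schur_elim_comm (RatFunc.X_sub_ne_zero (hpi x x)) (RatFunc.X_sub_ne_zero (hpi y y))
      (RatFunc.X_sub_mul_X_sub_sub_ne_zero (hpi x x) (hpi y y) (mul_mem (hpi x y) (hpi y x)))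
  · have hab' : ¬(a ∈ (G.verts.erase y).erase x ∧ b ∈ (G.verts.erase y).erase x) := hcomm ▸ hab
    exact (reduce_w_of_notMem _ (not_and_or.1 hab)).trans
      (reduce_w_of_notMem _ (not_and_or.1 hab')).symm

end WDigraph

theorem removeSeq_perm_general
    (G : WDigraph V) (hpi : G.PiNonpos)
    (l₁ l₂ : List V) (hnd : l₁.Nodup)
    (hsub : ∀ x ∈ l₁, x ∈ G.verts)
    (hperm : l₁.Perm l₂) :
    removeSeq G l₁ = removeSeq G l₂ := by
  induction hperm generalizing G with
  | nil => rfl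
  | cons x _ ih =>
    obtain ⟨hx, hnd⟩ := List.nodup_cons.1 hnd
    exact ih _ (hpi.reduce_erase (hsub x List.mem_cons_self)) hnd fun z hz =>
      Finset.mem_erase.2 ⟨ne_of_mem_of_not_mem hz hx, hsub z (List.mem_cons_of_mem x hz)⟩
  | swap x y l =>
    have hyx : y ≠ x := fun h => by simp [h] at hnd
    exact congrArg (removeSeq · l) (WDigraph.removeSeq_pair_comm hpi (hsub y (by simp))
      (hsub x (by simp)) hyx)
  | trans p₁ _ ih₁ ih₂ =>
    exact (ih₁ G hpi hnd hsub).trans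
      (ih₂ G hpi (p₁.nodup_iff.1 hnd) fun z hz => hsub z (p₁.mem_iff.2 hz))

/-- **Lemma 5.** Let `G ∈ 𝔾_π` have more than two vertices. For distinct vertices
`v₁,…,v_i` of `G` with `1 ≤ i < n`, removing them sequentially in any order gives
the same graph: `R̄(G;v₁,…,v_i) = R̄(G;v_{ρ(1)},…,v_{ρ(i)})` for any permutation `ρ`. -/
theorem removeSeq_perm
    (G : WDigraph V) (hG : G.Wf) (hpi : G.PiNonpos) (hcard : 2 < G.verts.card)
    (l₁ l₂ : List V) (hne : l₁ ≠ []) (hnd : l₁.Nodup)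
    (hsub : ∀ x ∈ l₁, x ∈ G.verts) (hlt : l₁.length < G.verts.card)
    (hperm : l₁.Perm l₂) :
    removeSeq G l₁ = removeSeq G l₂ :=
  removeSeq_perm_general G hpi l₁ l₂ hnd hsub hperm
end
end

section
/- Let 𝒢 = (V,E,ω) with V = {v₂,…,v_n}, n ≥ 3, and suppose e₂₃ ∈ E has weight ω(e₂₃) = ω₂₁ω₁₃/(λ − ω₁₁) for some ω₂₁, ω₁₁, ω₁₃ ∈ 𝕎. Let G̃ be the graph 𝒢 with loop bisected edge e₂₃ with intermediate vertex v₁, i.e., G̃ has vertex set {v₁,…,v_n}, the edge e₂₃ removed, a loop at v₁ of weight ω₁₁, an edge from v₂ to v₁ of weight ω₂₁ and an edge from v₁ to v₃ of weight ω₁₃, all other edges and weights unchanged. Then, as an identity of rational functions in 𝕎, det(M(G̃) − λI) = (ω₁₁ − λ)·det(M(𝒢) − λI). -/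
open scoped Classical

noncomputable section

variable {V : Type*} [Fintype V] [DecidableEq V]

/-- The graph `G` with loop bisected edge `e_{ik}` with (new) intermediate vertex
`none`: the edge `e_{ik}` is deleted and replaced by an edge `i → j` of weight `a`,
a loop at `j` of weight `l`, and an edge `j → k` of weight `b`, where `j = none`
is a new vertex. -/
def loopBisect (G : WDigraph V) (i k : V) (a l b : RatFunc ℂ) : WDigraph (Option V) where
  verts := insert none (G.verts.image some)
  w := fun x y => match x, y with
    | some u, some v => if u = i ∧ v = k then 0 else G.w u v
    | some u, none => if u = i then a else 0
    | none, some v => if v = k then b else 0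
    | none, none => l


/-!
Put the new vertex `v₁` first. Then `M(G̃) - λI` is a block matrix whose corner entry is
`ω₁₁ - λ`, whose remaining first row and column carry `ω₁₃` (at `v₃`) and `ω₂₁` (at `v₂`), and
whose lower right block is `M(𝒢) - λI` with the `(v₂, v₃)` entry erased. Expanding the
determinant through the Schur complement of the corner entry restores exactly the weight
`ω₂₁ω₁₃/(λ - ω₁₁)` at `(v₂, v₃)`.
-/

namespace Matrix

variable {K : Type*} [Field K] {n : Type*} [Fintype n] [DecidableEq n]

theorem det_fromBlocks_scalar₁₁ {a : K} (ha : a ≠ 0) (u v : n → K) (D : Matrix n n K) :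
    (fromBlocks (of fun _ _ => a) (replicateRow Unit v) (replicateCol Unit u) D).det
      = a * (D - a⁻¹ • vecMulVec u v).det := by
  let _ : Invertible (of fun _ _ => a : Matrix Unit Unit K) :=
    ⟨of fun _ _ => a⁻¹, by ext; simp [mul_apply, ha], by ext; simp [mul_apply, ha]⟩
  have hinv : ⅟(of fun _ _ => a : Matrix Unit Unit K) = of fun _ _ => a⁻¹ := rfl
  rw [det_fromBlocks₁₁, det_unique, hinv]
  congr 2
  ext i j
  simp [mul_apply, vecMulVec]
  ring

end Matrix

def updateWeight {α β : Type*} [DecidableEq α] (w : α → α → β) (i k : α) (c : β) :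
    α → α → β :=
  fun u v => if u = i ∧ v = k then c else w u v

theorem updateWeight_self {α β : Type*} [DecidableEq α] (w : α → α → β) (i k : α) :
    updateWeight w i k (w i k) = w := by
  funext u v
  unfold updateWeight
  split_ifs with h
  · rw [h.1, h.2]
  · rfl

namespace WDigraph

def charMatrix {α : Type*} [DecidableEq α] (s : Finset α) (w : α → α → RatFunc ℂ) :
    Matrix s s (RatFunc ℂ) :=
  Matrix.of fun i j => w i.1 j.1 - if i = j then RatFunc.X else 0

theorem charDet_eq_det_charMatrix (G : WDigraph V) :
    G.charDet = (charMatrix G.verts G.w).det :=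
  rfl

end WDigraph

open WDigraph

def loopBisectVertsEquiv (G : WDigraph V) (i k : V) (a l b : RatFunc ℂ) :
    Unit ⊕ G.verts ≃ (loopBisect G i k a l b).verts where
  toFun := Sum.elim (fun _ => ⟨none, Finset.mem_insert_self _ _⟩)
    fun v => ⟨some v.1, Finset.mem_insert_of_mem (Finset.mem_image_of_mem _ v.2)⟩
  invFun
    | ⟨none, _⟩ => Sum.inl ()
    | ⟨some v, h⟩ => Sum.inr ⟨v, by simpa [loopBisect] using h⟩
  left_inv := by rintro (_ | _) <;> rfl
  right_inv := by rintro ⟨_ | _, _⟩ <;> rfl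

@[simp]
theorem loopBisectVertsEquiv_inl_coe (G : WDigraph V) (i k : V) (a l b : RatFunc ℂ) (x : Unit) :
    (loopBisectVertsEquiv G i k a l b (Sum.inl x)).1 = none :=
  rfl

@[simp]
theorem loopBisectVertsEquiv_inr_coe (G : WDigraph V) (i k : V) (a l b : RatFunc ℂ)
    (v : G.verts) :
    (loopBisectVertsEquiv G i k a l b (Sum.inr v)).1 = some v.1 :=
  rfl

theorem charMatrix_loopBisect_submatrix (G : WDigraph V) (i k : V) (a l b : RatFunc ℂ) :
    (charMatrix _ (loopBisect G i k a l b).w).submatrix (loopBisectVertsEquiv G i k a l b)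
        (loopBisectVertsEquiv G i k a l b)
      = Matrix.fromBlocks (Matrix.of fun _ _ => l - RatFunc.X)
          (Matrix.replicateRow Unit fun v : G.verts => if v.1 = k then b else 0)
          (Matrix.replicateCol Unit fun v : G.verts => if v.1 = i then a else 0)
          (charMatrix G.verts (updateWeight G.w i k 0)) := by
  -- `loopBisect` must stay folded until `Matrix.of_apply` has fired: its vertex type depends on it.
  ext (_ | ⟨u, hu⟩) (_ | ⟨v, hv⟩) <;>
    simp only [Matrix.submatrix_apply, charMatrix, Matrix.of_apply, loopBisectVertsEquiv_inl_coe,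
      loopBisectVertsEquiv_inr_coe, EmbeddingLike.apply_eq_iff_eq] <;>
    simp [loopBisect, updateWeight]

theorem charMatrix_updateWeight_zero_sub (G : WDigraph V) (i k : V) {a l b : RatFunc ℂ}
    (hl : l ≠ RatFunc.X) :
    charMatrix G.verts (updateWeight G.w i k 0) - (l - RatFunc.X)⁻¹ •
        Matrix.vecMulVec (fun v : G.verts => if v.1 = i then a else 0)
          (fun v : G.verts => if v.1 = k then b else 0)
      = charMatrix G.verts (updateWeight G.w i k (a * b / (RatFunc.X - l))) := by
  ext u v
  by_cases hu : u.1 = i <;> by_cases hv : v.1 = k <;>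
    simp [charMatrix, updateWeight, Matrix.vecMulVec, hu, hv]
  have hlX : l - RatFunc.X ≠ 0 := sub_ne_zero.2 hl
  field_simp
  ring

theorem charDet_loopBisect (G : WDigraph V) (i k : V) {a l b : RatFunc ℂ}
    (hl : l ≠ RatFunc.X) :
    (loopBisect G i k a l b).charDet
      = (l - RatFunc.X) *
          (charMatrix G.verts (updateWeight G.w i k (a * b / (RatFunc.X - l)))).det := by
  rw [charDet_eq_det_charMatrix,
    ← Matrix.det_submatrix_equiv_self (loopBisectVertsEquiv G i k a l b),
    charMatrix_loopBisect_submatrix, Matrix.det_fromBlocks_scalar₁₁ (sub_ne_zero.2 hl),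
    charMatrix_updateWeight_zero_sub G i k hl]

theorem loopBisect_charDet_general
    (G : WDigraph V)
    (v₂ v₃ : V)
    (w21 w11 w13 : RatFunc ℂ)
    (hedge : G.w v₂ v₃ ≠ 0)
    (hw : G.w v₂ v₃ = w21 * w13 / (RatFunc.X - w11)) :
    (loopBisect G v₂ v₃ w21 w11 w13).charDet = (w11 - RatFunc.X) * G.charDet := by
  have hw11 : w11 ≠ RatFunc.X := by
    rintro rfl
    exact hedge (by rw [hw, sub_self, div_zero])
  rw [charDet_loopBisect G v₂ v₃ hw11, ← hw, updateWeight_self, charDet_eq_det_charMatrix]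

/-- (Determinant identity in the proof of Lemma 2.) Let `𝒢 = (V,E,ω)` with at
least two vertices and an edge `e₂₃` of weight `ω₂₁ω₁₃/(λ - ω₁₁)`, and let `G̃` be
`𝒢` with loop bisected edge `e₂₃` with new intermediate vertex `v₁`. Then, as an
identity of rational functions, `det(M(G̃) - λI) = (ω₁₁ - λ)·det(M(𝒢) - λI)`. -/
theorem loopBisect_charDet
    (G : WDigraph V) (hG : G.Wf) (hcard : 2 ≤ G.verts.card)
    (v₂ v₃ : V) (hne : v₂ ≠ v₃) (h₂ : v₂ ∈ G.verts) (h₃ : v₃ ∈ G.verts)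
    (w21 w11 w13 : RatFunc ℂ)
    (hedge : G.w v₂ v₃ ≠ 0)
    (hw : G.w v₂ v₃ = w21 * w13 / (RatFunc.X - w11)) :
    (loopBisect G v₂ v₃ w21 w11 w13).charDet = (w11 - RatFunc.X) * G.charDet :=
  loopBisect_charDet_general G v₂ v₃ w21 w11 w13 hedge hw
end
end
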